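/- arXiv:1206.3052 — 3 statements merged into one kernel-verified Lean document; each statement's English description precedes it below -/
import Mathlib

section
/- Let ∼ be an SK-congruence on a GEA E, and suppose c ∈ E is sharp with both E[0,c] and {f : f ⊥ c} hereditary. If E is orthogonally ordered, then c is principal. -/
universe u

/-- A generalized effect algebra: partial operation encoded by a definedness
relation `perp` together with a total function `op` whose values are only
meaningful when `perp` holds. -/
class GEA (E : Type u) where
  zero : E
  perp : E → E → Prop
  op : E → E → E
  perp_comm : ∀ {e f : E}, perp e f → perp f e
  op_comm : ∀ {e f : E}, perp e f → op e f = op f e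
  assoc_perp₁ : ∀ {d e f : E}, perp e f → perp d (op e f) → perp d e
  assoc_perp₂ : ∀ {d e f : E}, perp e f → perp d (op e f) → perp (op d e) f
  assoc_eq : ∀ {d e f : E}, perp e f → perp d (op e f) →
    op d (op e f) = op (op d e) f
  perp_zero : ∀ e : E, perp e zero
  op_zero : ∀ e : E, op e zero = e
  cancel : ∀ {d e f : E}, perp d e → perp d f → op d e = op d f → e = f
  pos : ∀ {e f : E}, perp e f → op e f = zero → e = zero ∧ f = zero

namespace GEA

variable {E : Type u} [GEA E]

/-- `e ≤ f` iff `e ⊕ d = f` for some `d`. -/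
def le (e f : E) : Prop := ∃ d : E, perp e d ∧ op e d = f

/-- `p` is sharp. -/
def Sharp (p : E) : Prop := ∀ d : E, le d p → perp d p → d = zero

/-- `p` is principal. -/
def Principal (p : E) : Prop :=
  ∀ e f : E, le e p → le f p → perp e f → le (op e f) p

/-- An ideal of a GEA. -/
def Ideal (S : Set E) : Prop :=
  (∀ s t : E, s ∈ S → le t s → t ∈ S) ∧
  (∀ s t : E, s ∈ S → t ∈ S → perp s t → op s t ∈ S)

/-- `E = H ⊕ K` : a direct sum decomposition into two subsets. -/
def DirectSum (H K : Set E) : Prop :=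
  (∀ h k : E, h ∈ H → k ∈ K → perp h k) ∧
  (∀ e : E, ∃! p : E × E,
    p.1 ∈ H ∧ p.2 ∈ K ∧ perp p.1 p.2 ∧ op p.1 p.2 = e)

/-- `FinSum e s x` : `x` is the (well-defined) orthosum of the finite
subfamily of `e` indexed by the finset `s`. -/
inductive FinSum {I : Type} (e : I → E) : Finset I → E → Prop
  | empty : FinSum e ∅ zero
  | cons {s : Finset I} {i : I} {x : E} (h : i ∉ s) :
      FinSum e s x → perp (e i) x → FinSum e (Finset.cons i s h) (op (e i) x)

/-- A family is orthogonal iff all its finite partial orthosums exist. -/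
def OrthoFam {I : Type} (e : I → E) : Prop := ∀ s : Finset I, ∃ x : E, FinSum e s x

/-- `m` is the orthosum of the family `e` : the family is orthogonal and `m`
is the supremum of its finite partial orthosums. -/
def IsOrthosum {I : Type} (e : I → E) (m : E) : Prop :=
  OrthoFam e ∧ (∀ (s : Finset I) (x : E), FinSum e s x → le x m) ∧
  ∀ b : E, (∀ (s : Finset I) (x : E), FinSum e s x → le x b) → le m b

/-- Dedekind orthocompleteness. -/
def DedekindOC (E : Type u) [GEA E] : Prop :=
  ∀ (I : Type) (e : I → E), OrthoFam e →
    (∃ b : E, ∀ (s : Finset I) (x : E), FinSum e s x → le x b) →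
    ∃ m : E, IsOrthosum e m

/-- A Sherstnev–Kalinin congruence on a GEA. -/
structure SKCong (E : Type u) [GEA E] (sim : E → E → Prop) : Prop where
  refl : ∀ e : E, sim e e
  symm : ∀ {e f : E}, sim e f → sim f e
  trans : ∀ {d e f : E}, sim d e → sim e f → sim d f
  sk1 : ∀ {e : E}, sim e zero → e = zero
  sk2 : ∀ {I : Type} (e f : I → E) (se sf : E), IsOrthosum e se →
    IsOrthosum f sf → (∀ i : I, sim (e i) (f i)) → sim se sf
  sk3d : ∀ {p s t : E}, perp s t → sim p (op s t) →
    ∃ e f : E, perp e f ∧ op e f = p ∧ sim e s ∧ sim f t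
  sk3e : ∀ {e f s t : E}, perp e f → perp s t → op e f = op s t →
    ∃ e₁ e₂ f₁ f₂ : E, perp e₁ e₂ ∧ op e₁ e₂ = e ∧ perp f₁ f₂ ∧ op f₁ f₂ = f ∧
      perp e₁ f₁ ∧ sim s (op e₁ f₁) ∧ perp e₂ f₂ ∧ sim t (op e₂ f₂)
  sk4a : ∀ {e f : E}, ¬ perp e f →
    ∃ e₁ f₁ : E, e₁ ≠ zero ∧ f₁ ≠ zero ∧ le e₁ e ∧ le f₁ f ∧ sim e₁ f₁
  sk4b : ∀ {e f : E}, ¬ le e f →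
    ∃ e₁ d₁ : E, e₁ ≠ zero ∧ d₁ ≠ zero ∧ le e₁ e ∧ perp d₁ f ∧ sim e₁ d₁

/-- Subequivalence: `f ≲ e`. -/
def Subeq (sim : E → E → Prop) (f e : E) : Prop :=
  ∃ e₁ : E, le e₁ e ∧ sim f e₁

/-- `e` and `f` are related. -/
def Related (sim : E → E → Prop) (e f : E) : Prop :=
  ∃ e₁ f₁ : E, e₁ ≠ zero ∧ f₁ ≠ zero ∧ le e₁ e ∧ le f₁ f ∧ sim e₁ f₁

/-- A hereditary subset. -/
def Hereditary (sim : E → E → Prop) (H : Set E) : Prop :=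
  ∀ h e : E, h ∈ H → Subeq sim e h → e ∈ H

/-- An exocentral mapping on a GEA. -/
structure Exocentral (π : E → E) : Prop where
  perp_map : ∀ {e f : E}, perp e f → perp (π e) (π f)
  op_map : ∀ {e f : E}, perp e f → π (op e f) = op (π e) (π f)
  idem : ∀ e : E, π (π e) = π e
  dec : ∀ e : E, le (π e) e
  orth : ∀ {e f : E}, π e = e → π f = zero → perp e f

/-- `π'` is the complementary mapping of `π` : `π'e = e ⊖ πe`. -/
def IsComplMap (π π' : E → E) : Prop :=
  ∀ e : E, perp (π e) (π' e) ∧ op (π e) (π' e) = e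

/-- `π` (with complement `π'`) splits the equivalence relation `sim`. -/
def Splits (sim : E → E → Prop) (π π' : E → E) : Prop :=
  ∀ e f : E, e ∈ Set.range π → f ∈ Set.range π' → sim e f →
    e = zero ∧ f = zero

/-- A hull system `(η_e)_{e ∈ E}` on a GEA, where `η e : E → E` is the hull
mapping indexed by `e`. -/
structure HullSystem (E : Type u) [GEA E] (η : E → E → E) : Prop where
  exo : ∀ e : E, Exocentral (η e)
  hs1 : ∀ x : E, η zero x = zero
  hs2 : ∀ e : E, η e e = e
  hs3 : ∀ e f x : E, η (η e f) x = η e (η f x)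
  hs3' : ∀ e f x : E, η e (η f x) = η f (η e x)

/-- A GEX-orthogonal family. -/
def GEXOrtho {I : Type} (e : I → E) : Prop :=
  ∃ π : I → E → E, (∀ i : I, Exocentral (π i)) ∧
    (∀ i j : I, i ≠ j → ∀ x : E, π i (π j x) = zero) ∧
    ∀ i : I, π i (e i) = e i

/-- Central orthocompleteness. -/
def CentrallyOC (E : Type u) [GEA E] : Prop :=
  ∀ (I : Type) (e : I → E), GEXOrtho e →
    (∃ m : E, IsOrthosum e m) ∧
    ∀ f : E, (∀ i : I, perp f (e i)) → ∀ m : E, IsOrthosum e m → perp f m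

/-- A dimension equivalence relation: an SK-congruence satisfying SK4a′. -/
def IsDER (E : Type u) [GEA E] (sim : E → E → Prop) : Prop :=
  SKCong E sim ∧
  ∀ e f : E, ¬ Related sim e f →
    ∃ π π' : E → E, Exocentral π ∧ IsComplMap π π' ∧ Splits sim π π' ∧
      π e = e ∧ π' f = f

/-- `η` is the hull system determined by the hull-determining set `Σ∼(E)` of
exocentral mappings splitting `sim` : each `η e` belongs to `Σ∼(E)` and is the
smallest member of `Σ∼(E)` fixing `e`. -/
def SigmaHull (sim : E → E → Prop) (η : E → E → E) : Prop :=
  (∀ e : E, ∃ π' : E → E, IsComplMap (η e) π' ∧ Splits sim (η e) π') ∧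
  ∀ (e : E) (π π' : E → E), Exocentral π → IsComplMap π π' →
    Splits sim π π' → π e = e →
      (∀ x : E, η e (π x) = η e x) ∧ (∀ x : E, π (η e x) = η e x)

/-- A simple element. -/
def Simple (sim : E → E → Prop) (k : E) : Prop :=
  ∀ e e' : E, perp e e' → op e e' = k → ¬ Related sim e e'

/-- A finite element. -/
def Finite' (sim : E → E → Prop) (f : E) : Prop :=
  ∀ e : E, le e f → sim e f → e = f

end GEA


namespace GEA
variable {E : Type u} [GEA E]

theorem aux_le_refl (a : E) : le a a := ⟨zero, perp_zero a, op_zero a⟩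

theorem aux_perp_of_le {a b c : E} (h : le a b) (hp : perp b c) : perp a c := by
  obtain ⟨r, hr, rfl⟩ := h
  exact perp_comm (assoc_perp₁ hr (perp_comm hp))

theorem aux_le_trans {a b c : E} (h1 : le a b) (h2 : le b c) : le a c := by
  obtain ⟨x, hx, rfl⟩ := h1
  obtain ⟨y, hy, rfl⟩ := h2
  have hy' : perp y (op x a) := by rw [← op_comm hx]; exact perp_comm hy
  have hyx : perp y x := assoc_perp₁ (perp_comm hx) hy'
  have h3 : perp (op y x) a := assoc_perp₂ (perp_comm hx) hy'
  have h4 : perp a (op x y) := by rw [← op_comm hyx]; exact perp_comm h3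
  exact ⟨op x y, h4, assoc_eq (perp_comm hyx) h4⟩

end GEA

/-- in an orthogonally ordered GEA, a sharp element with
hereditary interval and hereditary orthogonal set is principal. -/
theorem sharp_hereditary_orthoordered_principal {E : Type u} [GEA E]
    (sim : E → E → Prop) (hsim : GEA.SKCong E sim) (c : E)
    (hsharp : GEA.Sharp c)
    (hher1 : GEA.Hereditary sim {e : E | GEA.le e c})
    (hher2 : GEA.Hereditary sim {f : E | GEA.perp f c})
    (hoo : ∀ e f : E, (∀ d : E, GEA.perp d f → GEA.perp d e) → GEA.le e f) :
    GEA.Principal c := by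
  intro e f he hf hef
  apply hoo
  intro d hdc
  by_contra hnd
  obtain ⟨d₁, g₁, hd₁0, hg₁0, hd₁d, hg₁ef, hsdg⟩ := hsim.sk4a hnd
  have hd₁c : GEA.perp d₁ c := GEA.aux_perp_of_le hd₁d hdc
  have hg₁c : g₁ ∈ {f : E | GEA.perp f c} :=
    hher2 d₁ g₁ hd₁c ⟨d₁, GEA.aux_le_refl d₁, hsim.symm hsdg⟩
  obtain ⟨r, hr, hre⟩ := hg₁ef
  obtain ⟨e₁, e₂, f₁, f₂, he12, hee, hf12, hff, hef₁, hsimg, -, -⟩ :=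
    hsim.sk3e hef hr hre.symm
  have he₁c : GEA.le e₁ c := GEA.aux_le_trans ⟨e₂, he12, hee⟩ he
  have hf₁c : GEA.le f₁ c := GEA.aux_le_trans ⟨f₂, hf12, hff⟩ hf
  have hefc : GEA.perp (GEA.op e₁ f₁) c :=
    hher2 g₁ (GEA.op e₁ f₁) hg₁c ⟨g₁, GEA.aux_le_refl g₁, hsim.symm hsimg⟩
  have he₁p : GEA.perp e₁ c := GEA.aux_perp_of_le ⟨f₁, hef₁, rfl⟩ hefc
  have hf₁p : GEA.perp f₁ c :=
    GEA.aux_perp_of_le ⟨e₁, GEA.perp_comm hef₁, (GEA.op_comm hef₁).symm⟩ hefc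
  have he₁0 : e₁ = GEA.zero := hsharp e₁ he₁c he₁p
  have hf₁0 : f₁ = GEA.zero := hsharp f₁ hf₁c hf₁p
  have : GEA.op e₁ f₁ = GEA.zero := by rw [he₁0, hf₁0, GEA.op_zero]
  exact hg₁0 (hsim.sk1 (this ▸ hsimg))
end

section
/- Let (η_e)_{e∈E} be a hull system on a GEA E. Then for e, f ∈ E with e₁ := η_f e and f₁ := η_e f: (i) e ≥ e₁, f ≥ f₁, and e₁ ∼_η f₁ (i.e., η_{e₁} = η_{f₁}); (ii) e₁ and f₁ are both nonzero iff η_e ∧ η_f ≠ 0. -/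
universe u

/-- for a hull system, with `e₁ := η_f e` and `f₁ := η_e f`,
one has `e₁ ≤ e`, `f₁ ≤ f`, `e₁ ∼_η f₁`, and `e₁, f₁ ≠ 0` iff
`η_e ∧ η_f ≠ 0`. -/
theorem hull_system_monad_lemma {E : Type u} [GEA E]
    (η : E → E → E) (hη : GEA.HullSystem E η) (e f : E) :
    GEA.le (η f e) e ∧ GEA.le (η e f) f ∧
    (∀ x : E, η (η f e) x = η (η e f) x) ∧
    ((η f e ≠ GEA.zero ∧ η e f ≠ GEA.zero) ↔
      (fun x : E => η e (η f x)) ≠ (fun _ : E => GEA.zero)) := by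
  have key : ∀ x : E, η (η f e) x = η e (η f x) := fun x => by
    rw [hη.hs3 f e x, hη.hs3' f e x]
  have key2 : ∀ x : E, η (η e f) x = η e (η f x) := fun x => hη.hs3 e f x
  refine ⟨(hη.exo f).dec e, (hη.exo e).dec f, fun x => by rw [key, key2], ?_⟩
  constructor
  · rintro ⟨h1, h2⟩ hz
    apply h1
    have := congrFun hz (η f e)
    rw [← key (η f e), hη.hs2] at this
    exact this
  · intro hz
    constructor
    · intro h
      apply hz
      funext x
      rw [← key x, h, hη.hs1]
    · intro h
      apply hz
      funext x
      rw [← key2 x, h, hη.hs1]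
end

section
/- Let E be a DGEA with hull system (η_e) determined by Σ∼(E). Every simple element of E is finite, where k is simple iff every e ≤ k is unrelated to k ⊖ e, and f is finite iff e ≤ f with e ∼ f implies e = f. -/
universe u

/-- in a DGEA every simple element is finite. -/
theorem simple_is_finite {E : Type u} [GEA E]
    (sim : E → E → Prop) (hDER : GEA.IsDER E sim)
    (hD : GEA.DedekindOC E) (hC : GEA.CentrallyOC E)
    (η : E → E → E) (hη : GEA.HullSystem E η) (hSig : GEA.SigmaHull sim η)
    (k : E) (hk : GEA.Simple sim k) : GEA.Finite' sim k := by
  intro e hle hsim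
  obtain ⟨d, hpd, hop⟩ := hle
  obtain ⟨e₁, f₁, hp1, hop1, hs1, hs2⟩ := hDER.1.sk3d hpd (hop ▸ hsim)
  by_cases hf : f₁ = GEA.zero
  · have hd : d = GEA.zero := hDER.1.sk1 (hDER.1.symm (hf ▸ hs2))
    rw [← hop, hd, GEA.op_zero]
  · have hd : d ≠ GEA.zero := fun h => hf (hDER.1.sk1 (h ▸ hs2))
    exact absurd ⟨f₁, d, hf, hd,
      ⟨e₁, GEA.perp_comm hp1, (GEA.op_comm hp1).symm.trans hop1⟩,
      ⟨GEA.zero, GEA.perp_zero d, GEA.op_zero d⟩, hs2⟩ (hk e d hpd hop)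
end
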